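/- Let F be a finite field with q elements, q odd. Then for every a ∈ F and every integer n ≥ 1, ∑_{f} μ(f)·η(f(a)) = 0, where the sum runs over all monic polynomials f ∈ F[T] of degree n, η : F → ℤ is the quadratic character of F (η(0) = 0, η(x) = 1 if x is a nonzero square in F, η(x) = −1 otherwise), and f(a) denotes the evaluation of f at a. -/

import Mathlib

open Polynomial
open scoped Classical

/-- The Möbius function on `F[T]`: `(-1)^k` for a squarefree polynomial with `k`
irreducible factors, and `0` for non-squarefree polynomials. -/
noncomputable def polyMoebius {F : Type*} [Field F] (f : F[X]) : ℤ :=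
  if Squarefree f then (-1) ^ Multiset.card (UniqueFactorizationMonoid.factors f) else 0

/-- The Liouville function on `F[T]`: `(-1)^{Ω(f)}` where `Ω(f)` is the number of
irreducible factors of `f` counted with multiplicity. -/
noncomputable def polyLiouville {F : Type*} [Field F] (f : F[X]) : ℤ :=
  (-1) ^ Multiset.card (UniqueFactorizationMonoid.factors f)

/-- The sum of a weight `w` over all monic polynomials of degree `n` in `F[T]`. -/
noncomputable def coeffSum {F : Type*} [Field F] (w : F[X] → ℤ) (n : ℕ) : ℤ :=
  ∑ᶠ f ∈ {f : F[X] | f.Monic ∧ f.natDegree = n}, w f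

/-- `e_even`: the sum of the even-index elementary symmetric polynomials in
`cos θ_1, …, cos θ_d`, i.e. `½(∏(1 + cos θ_j) + ∏(1 − cos θ_j))`. -/
noncomputable def eEven {d : ℕ} (θ : Fin d → ℝ) : ℝ :=
  ((∏ j, (1 + Real.cos (θ j))) + ∏ j, (1 - Real.cos (θ j))) / 2

/-- `e_odd`: the sum of the odd-index elementary symmetric polynomials in
`cos θ_1, …, cos θ_d`, i.e. `½(∏(1 + cos θ_j) − ∏(1 − cos θ_j))`. -/
noncomputable def eOdd {d : ℕ} (θ : Fin d → ℝ) : ℝ :=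
  ((∏ j, (1 + Real.cos (θ j))) - ∏ j, (1 - Real.cos (θ j))) / 2

/-- The constant `C_m = ∏_{i=1}^r (1 − q^{−M_i}) / (2^{M'} ∏_{j=1}^{M'} sin² θ_j)`. -/
noncomputable def biasConst {d r : ℕ} (q : ℕ) (Mi : Fin r → ℕ) (θ : Fin d → ℝ) : ℝ :=
  (∏ i, (1 - (q : ℝ) ^ (-(Mi i : ℤ)))) / (2 ^ d * ∏ j, Real.sin (θ j) ^ 2)

/-- The quadratic character of a finite field `F`: `η(0) = 0`, `η(x) = 1` if `x` is a
nonzero square, and `η(x) = −1` otherwise. -/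
noncomputable def quadChar (F : Type*) [Field F] (x : F) : ℤ :=
  if x = 0 then 0 else if IsSquare x then 1 else -1

/-! Write `T l = ∑_{deg h = l} χ (h a)` and `B k = ∑_{deg g = k} μ g * χ (g a)`, sums over
monic polynomials. Since `f ↦ f + c` permutes the monic polynomials of degree `l ≥ 1` and
shifts `f a` by `c`, the values `f a` are equidistributed over `F`, so `T l = 0` for `l ≥ 1`,
while `T 0 = 1`. As `f ↦ χ (f a)` is multiplicative,
`∑_{k + l = n} B k * T l = ∑_{deg f = n} χ (f a) * ∑_{g ∣ f} μ g`,
and the inner Möbius sum vanishes when `n ≥ 1`. Hence `B n = B n * T 0 = 0`. -/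

open UniqueFactorizationMonoid Finset

section PrimeFactors

variable {M : Type*} [CommMonoidWithZero M] [UniqueFactorizationMonoid M] {a : M} {S : Finset M}

theorem normalizedFactors_prod_of_subset_primeFactors [NormalizationMonoid M]
    (hS : S ⊆ primeFactors a) : normalizedFactors (∏ p ∈ S, p) = S.val := by
  have hnorm : ∀ p ∈ S, Irreducible p ∧ normalize p = p := fun p hp ↦
    have hp' := mem_primeFactors.1 (hS hp)
    ⟨irreducible_of_normalized_factor p hp', normalize_normalized_factor p hp'⟩
  rw [prod_eq_multiset_prod, Multiset.map_id',
    normalizedFactors_prod_eq _ fun p hp ↦ (hnorm p hp).1,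
    Multiset.map_congr rfl fun p hp ↦ (hnorm p hp).2, Multiset.map_id']

theorem primeFactors_prod_of_subset_primeFactors [NormalizationMonoid M]
    (hS : S ⊆ primeFactors a) : primeFactors (∏ p ∈ S, p) = S := by
  rw [primeFactors, normalizedFactors_prod_of_subset_primeFactors hS, val_toFinset]

theorem squarefree_prod_of_subset_primeFactors [Nontrivial M] [NormalizationMonoid M]
    (hS : S ⊆ primeFactors a) : Squarefree (∏ p ∈ S, p) := by
  have h0 : ∏ p ∈ S, p ≠ 0 := prod_ne_zero_iff.2 fun p hp ↦
    (prime_of_normalized_factor p (mem_primeFactors.1 (hS hp))).ne_zero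
  rw [squarefree_iff_nodup_normalizedFactors h0, normalizedFactors_prod_of_subset_primeFactors hS]
  exact S.nodup

theorem prod_primeFactors_of_squarefree [Nontrivial M] [StrongNormalizationMonoid M]
    (ha : Squarefree a) : ∏ p ∈ primeFactors a, p = normalize a := by
  rw [prod_eq_multiset_prod, Multiset.map_id', primeFactors_val_eq_normalizedFactors ha.isRadical,
    prod_normalizedFactors_eq ha.ne_zero]

end PrimeFactors

theorem Polynomial.Monic.mul_divByMonic_of_dvd {R : Type*} [CommRing R] {f g : R[X]}
    (hg : g.Monic) (h : g ∣ f) : g * (f /ₘ g) = f := by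
  simpa [(modByMonic_eq_zero_iff_dvd hg).2 h] using modByMonic_add_div f g

theorem Polynomial.Monic.monic_divByMonic_of_dvd {R : Type*} [CommRing R] {f g : R[X]}
    (hf : f.Monic) (hg : g.Monic) (h : g ∣ f) : (f /ₘ g).Monic :=
  hg.of_mul_monic_left ((hg.mul_divByMonic_of_dvd h).symm ▸ hf)

theorem polyMoebius_of_squarefree {F : Type*} [Field F] {f : F[X]} (hf : Squarefree f) :
    polyMoebius f = (-1) ^ #(primeFactors f) := by
  rw [polyMoebius, if_pos hf, card_def, primeFactors_val_eq_normalizedFactors hf.isRadical,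
    normalizedFactors, Multiset.card_map]

section FiniteField

variable {F : Type*} [Field F] [Fintype F]

variable (F) in
theorem finite_setOf_monic_natDegree_eq (n : ℕ) :
    {f : F[X] | f.Monic ∧ f.natDegree = n}.Finite :=
  Set.finite_coe_iff.1 <|
    Finite.of_equiv _ ((monicEquivDegreeLT n).trans (degreeLTEquiv F n).toEquiv).symm

variable (F) in
noncomputable def monicOfDegree (n : ℕ) : Finset F[X] :=
  (finite_setOf_monic_natDegree_eq F n).toFinset

theorem mem_monicOfDegree {n : ℕ} {f : F[X]} :
    f ∈ monicOfDegree F n ↔ f.Monic ∧ f.natDegree = n := by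
  simp [monicOfDegree]

theorem coe_monicOfDegree (n : ℕ) :
    (monicOfDegree F n : Set F[X]) = {f | f.Monic ∧ f.natDegree = n} :=
  Set.Finite.coe_toFinset _

theorem monicOfDegree_zero : monicOfDegree F 0 = {1} := by
  ext f
  rw [mem_monicOfDegree, mem_singleton]
  exact ⟨fun h ↦ eq_one_of_monic_natDegree_zero h.1 h.2, by rintro rfl; simp⟩

noncomputable def monicDivisors (f : F[X]) : Finset F[X] :=
  ((range (f.natDegree + 1)).biUnion (monicOfDegree F)).filter (· ∣ f)

theorem mem_monicDivisors {f g : F[X]} (hf : f ≠ 0) :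
    g ∈ monicDivisors f ↔ g.Monic ∧ g ∣ f := by
  simp only [monicDivisors, mem_filter, mem_biUnion, mem_range, mem_monicOfDegree]
  exact ⟨fun ⟨⟨_, _, hg, _⟩, hgf⟩ ↦ ⟨hg, hgf⟩, fun ⟨hg, hgf⟩ ↦
    ⟨⟨_, Nat.lt_succ_of_le (natDegree_le_of_dvd hgf hf), hg, rfl⟩, hgf⟩⟩

theorem sum_monicDivisors_polyMoebius {f : F[X]} (hf : f ≠ 0) (hu : ¬IsUnit f) :
    ∑ g ∈ monicDivisors f, polyMoebius g = 0 := by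
  have hP : (primeFactors f).Nonempty :=
    nonempty_iff_ne_empty.2 ((primeFactors_eq_empty_iff hf).not.2 hu)
  have hmonic : ∀ S ⊆ primeFactors f, (∏ p ∈ S, p).Monic := fun S hS ↦
    monic_prod_of_monic _ _ fun p hp ↦ by
      have hp' := mem_primeFactors.1 (hS hp)
      rw [← normalize_normalized_factor p hp']
      exact monic_normalize (prime_of_normalized_factor p hp').ne_zero
  have hsq : ∀ g ∈ monicDivisors f, polyMoebius g ≠ 0 → Squarefree g := fun g _ h ↦
    by_contra fun hg ↦ h (if_neg hg)
  -- `μ` vanishes off the squarefree monic divisors, which are the products of subsets of the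
  -- prime factors of `f`.
  rw [← sum_filter_of_ne hsq, ← sum_powerset_neg_one_pow_card_of_nonempty hP]
  refine sum_nbij' primeFactors (∏ p ∈ ·, p) ?_ ?_ ?_ ?_ ?_
  · intro g hg
    rw [mem_filter, mem_monicDivisors hf] at hg
    rw [mem_powerset]
    exact radical_dvd_radical_iff_primeFactors_subset_primeFactors.1
      (radical_dvd_radical hg.1.2 hf)
  · intro S hS
    rw [mem_powerset] at hS
    rw [mem_filter, mem_monicDivisors hf]
    exact ⟨⟨hmonic S hS, (prod_dvd_prod_of_subset _ _ _ hS).trans radical_dvd_self⟩,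
      squarefree_prod_of_subset_primeFactors hS⟩
  · intro g hg
    rw [mem_filter, mem_monicDivisors hf] at hg
    rw [prod_primeFactors_of_squarefree hg.2, hg.1.1.normalize_eq_self]
  · intro S hS
    exact primeFactors_prod_of_subset_primeFactors (mem_powerset.1 hS)
  · intro g hg
    exact polyMoebius_of_squarefree (mem_filter.1 hg).2

theorem add_C_mem_monicOfDegree {n : ℕ} (hn : n ≠ 0) {f : F[X]} (hf : f ∈ monicOfDegree F n)
    (c : F) : f + C c ∈ monicOfDegree F n := by
  rw [mem_monicOfDegree] at hf ⊢
  have hdeg : degree (C c) < f.degree :=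
    degree_C_le.trans_lt (natDegree_pos_iff_degree_pos.1 (hf.2 ▸ Nat.pos_of_ne_zero hn))
  exact ⟨hf.1.add_of_left hdeg, by rw [natDegree_add_C, hf.2]⟩

theorem sum_monicOfDegree_comp_eval {M : Type*} [AddCommMonoid M] (w : F → M) (a : F) {n : ℕ}
    (hn : n ≠ 0) :
    ∑ f ∈ monicOfDegree F n, w (f.eval a) =
      #{g ∈ monicOfDegree F n | g.eval a = 0} • ∑ c, w c := by
  calc ∑ f ∈ monicOfDegree F n, w (f.eval a)
      = ∑ p ∈ {g ∈ monicOfDegree F n | g.eval a = 0} ×ˢ univ, w p.2 := by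
        refine sum_nbij' (fun f ↦ (f + C (-f.eval a), f.eval a)) (fun p ↦ p.1 + C p.2)
          (fun f hf ↦ ?_) (fun p hp ↦ ?_) (fun _ _ ↦ by simp) (fun p hp ↦ ?_)
          (fun _ _ ↦ rfl)
        · simpa [mem_product] using add_C_mem_monicOfDegree hn hf (-f.eval a)
        · exact add_C_mem_monicOfDegree hn (mem_filter.1 (mem_product.1 hp).1).1 _
        · simp [(mem_filter.1 (mem_product.1 hp).1).2]
    _ = _ := by simp only [sum_product, sum_const]

theorem sum_monicOfDegree_sum_monicDivisors {R : Type*} [CommSemiring R] (u v : F[X] → R)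
    (n : ℕ) :
    ∑ f ∈ monicOfDegree F n, ∑ g ∈ monicDivisors f, u g * v (f /ₘ g) =
      ∑ kl ∈ antidiagonal n,
        (∑ g ∈ monicOfDegree F kl.1, u g) * ∑ h ∈ monicOfDegree F kl.2, v h := by
  simp_rw [sum_mul_sum, ← sum_product']
  rw [sum_sigma', sum_sigma']
  refine sum_nbij' (fun x ↦ ⟨(x.2.natDegree, (x.1 /ₘ x.2).natDegree), (x.2, x.1 /ₘ x.2)⟩)
    (fun y ↦ ⟨y.2.1 * y.2.2, y.2.1⟩) ?_ ?_ ?_ ?_ ?_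
  · rintro ⟨f, g⟩ hx
    simp only [mem_sigma, mem_monicOfDegree] at hx
    obtain ⟨⟨hf, rfl⟩, hgf⟩ := hx
    obtain ⟨hg, hgf⟩ := (mem_monicDivisors hf.ne_zero).1 hgf
    have hq := hf.monic_divByMonic_of_dvd hg hgf
    simp only [mem_sigma, HasAntidiagonal.mem_antidiagonal, mem_product, mem_monicOfDegree,
      and_true]
    refine ⟨?_, hg, hq⟩
    rw [← hg.natDegree_mul hq, hg.mul_divByMonic_of_dvd hgf]
  · rintro ⟨⟨k, l⟩, g, h⟩ hy
    simp only [mem_sigma, HasAntidiagonal.mem_antidiagonal, mem_product,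
      mem_monicOfDegree] at hy
    obtain ⟨rfl, ⟨hg, rfl⟩, hh, rfl⟩ := hy
    simp only [mem_sigma, mem_monicOfDegree]
    refine ⟨⟨hg.mul hh, hg.natDegree_mul hh⟩, ?_⟩
    exact (mem_monicDivisors (hg.mul hh).ne_zero).2 ⟨hg, dvd_mul_right g h⟩
  · rintro ⟨f, g⟩ hx
    simp only [mem_sigma, mem_monicOfDegree] at hx
    obtain ⟨hg, hgf⟩ := (mem_monicDivisors hx.1.1.ne_zero).1 hx.2
    simp [hg.mul_divByMonic_of_dvd hgf]
  · rintro ⟨⟨k, l⟩, g, h⟩ hy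
    simp only [mem_sigma, HasAntidiagonal.mem_antidiagonal, mem_product,
      mem_monicOfDegree] at hy
    obtain ⟨rfl, ⟨hg, rfl⟩, hh, rfl⟩ := hy
    simp [mul_divByMonic_cancel_left h hg]
  · rintro ⟨f, g⟩ hx
    rfl

theorem sum_monicOfDegree_polyMoebius_mul_eval {R : Type*} [CommRing R] (χ : MulChar F R)
    (hχ : ∑ x, χ x = 0) (a : F) {n : ℕ} (hn : n ≠ 0) :
    ∑ f ∈ monicOfDegree F n, (polyMoebius f : R) * χ (f.eval a) = 0 := by
  have hT : ∀ l ≠ 0, ∑ h ∈ monicOfDegree F l, χ (h.eval a) = 0 := fun l hl ↦ by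
    rw [sum_monicOfDegree_comp_eval _ a hl, hχ, smul_zero]
  calc ∑ f ∈ monicOfDegree F n, (polyMoebius f : R) * χ (f.eval a)
      = ∑ kl ∈ antidiagonal n,
          (∑ g ∈ monicOfDegree F kl.1, (polyMoebius g : R) * χ (g.eval a)) *
            ∑ h ∈ monicOfDegree F kl.2, χ (h.eval a) := by
        rw [sum_eq_single_of_mem (n, 0) (by simp) fun kl hkl hne ↦ ?_]
        · simp [monicOfDegree_zero]
        · rw [hT kl.2 fun h ↦ hne (Prod.ext (by simpa [h] using hkl) h), mul_zero]
    _ = ∑ f ∈ monicOfDegree F n, ∑ g ∈ monicDivisors f,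
          (polyMoebius g : R) * χ (g.eval a) * χ ((f /ₘ g).eval a) :=
        (sum_monicOfDegree_sum_monicDivisors _ _ n).symm
    _ = ∑ f ∈ monicOfDegree F n,
          χ (f.eval a) * ((∑ g ∈ monicDivisors f, polyMoebius g : ℤ) : R) := by
        refine sum_congr rfl fun f hf ↦ ?_
        rw [Int.cast_sum, mul_sum]
        refine sum_congr rfl fun g hg ↦ ?_
        obtain ⟨hg, hgf⟩ := (mem_monicDivisors (mem_monicOfDegree.1 hf).1.ne_zero).1 hg
        rw [mul_assoc, ← map_mul, ← eval_mul, hg.mul_divByMonic_of_dvd hgf, mul_comm]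
    _ = 0 := sum_eq_zero fun f hf ↦ by
        obtain ⟨hmonic, rfl⟩ := mem_monicOfDegree.1 hf
        have hu : ¬IsUnit f := fun hu ↦ hn (natDegree_eq_zero_of_isUnit hu)
        rw [sum_monicDivisors_polyMoebius hmonic.ne_zero hu, Int.cast_zero, mul_zero]

end FiniteField

theorem quadChar_eq_quadraticChar {F : Type*} [Field F] [Fintype F] (x : F) :
    quadChar F x = quadraticChar F x := by
  simp only [quadChar, quadraticChar_apply, quadraticCharFun]
  split_ifs <;> rfl

/-- For `q` odd, `a ∈ F` and `n ≥ 1`, the μ-bias for the quadratic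
character modulo the linear polynomial `T − a` vanishes:
`∑_{f monic, deg f = n} μ(f)·η(f(a)) = 0`. -/
theorem muBias_degree_one_modulus {F : Type*} [Field F] [Fintype F]
    (hq : Odd (Fintype.card F)) (a : F) (n : ℕ) (hn : 1 ≤ n) :
    ∑ᶠ f ∈ {f : Polynomial F | f.Monic ∧ f.natDegree = n},
      polyMoebius f * quadChar F (f.eval a) = 0 := by
  have hchar : ringChar F ≠ 2 := fun h ↦
    Nat.not_even_iff_odd.2 hq (Nat.even_iff.2 (FiniteField.even_card_of_char_two h))
  rw [← coe_monicOfDegree, finsum_mem_coe_finset]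
  simpa [quadChar_eq_quadraticChar] using
    sum_monicOfDegree_polyMoebius_mul_eval _ (quadraticChar_sum_zero hchar) a
      (Nat.one_le_iff_ne_zero.1 hn)
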